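/- Let m, c ∈ ℝ with 0 ≤ c ≤ m, and let t₀ be a real number satisfying t₀³ − t₀² − t₀ − 1 = 0. Then for every λ ∈ ℂ with Im λ ≠ 0 and |Im λ| > t₀·m, one has |Im λ| > m and |σ_λ + c/λ| < 2/(1 + (m/|Im λ|)²), where σ_λ = 1 if Re λ ≥ 0 and σ_λ = −1 if Re λ < 0. Equivalently, the set C = {λ ∈ ℂ∖ℝ : not (|Im λ| > m and |σ_λ + c/λ| < 2/(1 + (m/|Im λ|)²))} is contained in {λ : 0 < |Im λ| ≤ t₀·m}. -/

import Mathlib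

/-! With `s = m / |Im λ|` the triangle inequality gives `‖σ_λ + c/λ‖ ≤ 1 + s`, so it suffices that
`(1 + s)(1 + s²) < 2`. The left side increases in `s ≥ 0`, and at `s = 1/t₀` it equals
`(t₀³ + t₀² + t₀ + 1)/t₀³ = 2` because `t₀` is a root of `t³ − t² − t − 1`; the hypothesis
`|Im λ| > t₀ m` is exactly `s < 1/t₀`. -/

open Complex

noncomputable section

/-- The region `Γ` determined by parameters `m` and `c`:
`λ ∈ ℂ∖ℝ` with `|Im λ| > m` and `|σ_λ + c/λ| < 2/(1 + (m/|Im λ|)²)`,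
where `σ_λ = 1` if `Re λ ≥ 0` and `σ_λ = −1` otherwise. -/
def GammaSet (m c : ℝ) : Set ℂ :=
  {l | l.im ≠ 0 ∧ m < |l.im| ∧
    ‖(if 0 ≤ l.re then (1 : ℂ) else -1) + (c : ℂ) / l‖ < 2 / (1 + (m / |l.im|) ^ 2)}

/-- `C = (ℂ∖ℝ) ∖ Γ`. -/
def CSet (m c : ℝ) : Set ℂ := {l : ℂ | l.im ≠ 0} \ GammaSet m c

lemma one_lt_of_cubic_eq_zero {t : ℝ} (ht : t ^ 3 - t ^ 2 - t - 1 = 0) : 1 < t := by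
  nlinarith [sq_nonneg t, sq_nonneg (t - 1), sq_nonneg (t + 1)]

lemma one_add_mul_one_add_sq_lt_two {t s : ℝ} (ht : t ^ 3 - t ^ 2 - t - 1 = 0) (hs : 0 ≤ s)
    (hts : t * s < 1) : (1 + s) * (1 + s ^ 2) < 2 := by
  have ht0 : 0 < t := one_pos.trans (one_lt_of_cubic_eq_zero ht)
  have hu : 0 ≤ t * s := mul_nonneg ht0.le hs
  have hmono : (t + t * s) * (t ^ 2 + (t * s) ^ 2) < (t + 1) * (t ^ 2 + 1) :=
    mul_lt_mul (by linarith) (by nlinarith) (by positivity) (by positivity)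
  have hscaled : (1 + s) * (1 + s ^ 2) * t ^ 3 < 2 * t ^ 3 := by
    calc (1 + s) * (1 + s ^ 2) * t ^ 3 = (t + t * s) * (t ^ 2 + (t * s) ^ 2) := by ring
      _ < (t + 1) * (t ^ 2 + 1) := hmono
      _ = 2 * t ^ 3 := by linear_combination -ht
  exact lt_of_mul_lt_mul_right hscaled (by positivity)

lemma norm_sign_add_div_le {m c : ℝ} {l : ℂ} (hc0 : 0 ≤ c) (hcm : c ≤ m) (him : l.im ≠ 0) :
    ‖(if 0 ≤ l.re then (1 : ℂ) else -1) + (c : ℂ) / l‖ ≤ 1 + m / |l.im| := by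
  have hsign : ‖if 0 ≤ l.re then (1 : ℂ) else -1‖ = 1 := by split <;> simp
  have hdiv : ‖(c : ℂ) / l‖ ≤ m / |l.im| := by
    rw [norm_div, Complex.norm_real, Real.norm_of_nonneg hc0]
    exact div_le_div₀ (hc0.trans hcm) hcm (abs_pos.mpr him) (Complex.abs_im_le_norm l)
  calc _ ≤ ‖if 0 ≤ l.re then (1 : ℂ) else -1‖ + ‖(c : ℂ) / l‖ := norm_add_le _ _
    _ ≤ 1 + m / |l.im| := by rw [hsign]; gcongr

lemma mem_gammaSet_of_mul_lt_abs_im {m c t : ℝ} {l : ℂ} (hc0 : 0 ≤ c) (hcm : c ≤ m)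
    (ht : t ^ 3 - t ^ 2 - t - 1 = 0) (him : l.im ≠ 0) (hlt : t * m < |l.im|) :
    l ∈ GammaSet m c := by
  have hm0 : 0 ≤ m := hc0.trans hcm
  have hy0 : 0 < |l.im| := abs_pos.mpr him
  have hs0 : 0 ≤ m / |l.im| := div_nonneg hm0 hy0.le
  have hts : t * (m / |l.im|) < 1 := by rwa [← mul_div_assoc, div_lt_one hy0]
  refine ⟨him, ?_, ?_⟩
  · nlinarith [one_lt_of_cubic_eq_zero ht]
  · calc _ ≤ 1 + m / |l.im| := norm_sign_add_div_le hc0 hcm him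
      _ < 2 / (1 + (m / |l.im|) ^ 2) := by
        rw [lt_div_iff₀ (by positivity)]
        exact one_add_mul_one_add_sq_lt_two ht hs0 hts

/-- Proposition 1.1: if `t₀` is a real zero of `t³ − t² − t − 1`, then every non-real `λ`
with `|Im λ| > t₀·m` lies in `Γ`; equivalently `C ⊆ {λ : 0 < |Im λ| ≤ t₀·m}`. -/
theorem statement0 (m c t₀ : ℝ) (hc0 : 0 ≤ c) (hcm : c ≤ m)
    (ht : t₀ ^ 3 - t₀ ^ 2 - t₀ - 1 = 0) :
    (∀ l : ℂ, l.im ≠ 0 → t₀ * m < |l.im| →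
      m < |l.im| ∧
        ‖(if 0 ≤ l.re then (1 : ℂ) else -1) + (c : ℂ) / l‖ <
          2 / (1 + (m / |l.im|) ^ 2)) ∧
    CSet m c ⊆ {l : ℂ | 0 < |l.im| ∧ |l.im| ≤ t₀ * m} := by
  refine ⟨fun l him hlt => (mem_gammaSet_of_mul_lt_abs_im hc0 hcm ht him hlt).2, ?_⟩
  rintro l ⟨him, hnot⟩
  exact ⟨abs_pos.mpr him,
    le_of_not_gt fun hlt => hnot (mem_gammaSet_of_mul_lt_abs_im hc0 hcm ht him hlt)⟩
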